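/- Let k be an algebraically closed field and let G and H be finite groups. If X is an indecomposable finite dimensional kG-module and Y is an indecomposable finite dimensional kH-module, then the outer tensor product X ⊗_k Y is an indecomposable k[G × H]-module. -/

import Mathlib

/-!
By Fitting's lemma, an endomorphism of an indecomposable finite dimensional representation that
commutes with the group is nilpotent or invertible. Over an algebraically closed field this makes
its commutant `R` equal to `k` modulo its Jacobson radical, through a residue map `R →ₐ[k] k`.
An idempotent endomorphism `e` of `V ⊗ W` commuting with `G × H` is a block matrix over `R`
(blocks indexed by a basis of `W`) commuting with the matrices of `τ`. Its residue is an
idempotent matrix over `k` commuting with `τ`, hence `0` or `1` because `W` is indecomposable.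
The Jacobson radical of the matrix ring over `R` contains the matrices with entries in that of
`R`, and contains no nonzero idempotent, so `e` or `1 - e` vanishes.
-/

open TensorProduct

/-- A representation is indecomposable if its space is nonzero and it is not
the direct sum of two nonzero subrepresentations. -/
def Representation.IsIndecomposable (k G V : Type) [Field k] [Group G]
    [AddCommGroup V] [Module k V] (ρ : Representation k G V) : Prop :=
  (∃ v : V, v ≠ 0) ∧
    ∀ p q : Submodule k V,
      (∀ (g : G) (v : V), v ∈ p → ρ g v ∈ p) →
      (∀ (g : G) (v : V), v ∈ q → ρ g v ∈ q) →
      IsCompl p q → p = ⊥ ∨ q = ⊥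

open Module

namespace Module.End

variable {R M : Type*} [Semiring R] [AddCommMonoid M] [Module R M] {f g : End R M}

lemma ker_mem_invtSubmodule_of_commute (h : Commute f g) : LinearMap.ker f ∈ g.invtSubmodule :=
  fun x (hx : f x = 0) => show f (g x) = 0 by rw [← mul_apply, h.eq, mul_apply, hx, map_zero]

lemma range_mem_invtSubmodule_of_commute (h : Commute f g) :
    LinearMap.range f ∈ g.invtSubmodule := by
  rintro _ ⟨x, rfl⟩
  exact ⟨g x, by rw [← mul_apply, h.eq, mul_apply]⟩

end Module.End

section JacobsonRadical

variable {R : Type*} [Ring R]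

lemma IsNilpotent.mul_ne_one [Nontrivial R] {x : R} (hx : IsNilpotent x) (y : R) : y * x ≠ 1 := by
  intro hyx
  obtain ⟨n, hn⟩ := hx
  have hpow : ∀ m : ℕ, y ^ m * x ^ m = 1 := by
    intro m
    induction m with
    | zero => simp
    | succ m ih =>
      rw [_root_.pow_succ, _root_.pow_succ', mul_assoc, ← mul_assoc y, hyx, one_mul, ih]
  simpa [hn] using hpow n

lemma mem_jacobson_bot_of_isNilpotent [Nontrivial R] (h : ∀ x : R, IsNilpotent x ∨ IsUnit x)
    {x : R} (hx : IsNilpotent x) : x ∈ Ideal.jacobson ⊥ := by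
  refine Ideal.mem_jacobson_iff.2 fun y => ?_
  have hyx : IsNilpotent (y * x) := (h (y * x)).resolve_right fun ⟨u, hu⟩ =>
    hx.mul_ne_one (↑u⁻¹ * y) (by rw [mul_assoc, ← hu, Units.inv_mul])
  obtain ⟨u, hu⟩ := hyx.isUnit_add_one
  refine ⟨↑u⁻¹, ?_⟩
  rw [Submodule.mem_bot, mul_assoc, ← mul_add_one, ← hu, Units.inv_mul, sub_self]

lemma IsIdempotentElem.eq_zero_of_mem_jacobson_bot {e : R} (he : IsIdempotentElem e)
    (hJ : e ∈ Ideal.jacobson ⊥) : e = 0 := by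
  obtain ⟨z, hz⟩ := Ideal.mem_jacobson_iff.1 hJ (-1)
  rw [Submodule.mem_bot, mul_neg_one, neg_mul, neg_add_eq_sub, ← mul_one_sub, sub_eq_zero] at hz
  rw [← one_mul e, ← hz, mul_assoc, sub_mul, one_mul, he.eq, sub_self, mul_zero]

lemma IsIdempotentElem.matrix_eq_zero_of_map_eq_zero {S F : Type*} [Ring S] [FunLike F R S]
    [RingHomClass F R S] {ι : Type*} [Fintype ι] [DecidableEq ι] {f : F}
    (hf : ∀ x, f x = 0 → x ∈ Ideal.jacobson ⊥) {M : Matrix ι ι R}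
    (hM : IsIdempotentElem M) (h : M.map f = 0) : M = 0 := by
  refine hM.eq_zero_of_mem_jacobson_bot ?_
  rw [← Ideal.matrix_bot]
  exact Ideal.matrix_jacobson_le ⊥ fun i j => hf _ (congrFun (congrFun h i) j)

end JacobsonRadical

section Residue

variable {k A : Type*} [Field k] [Ring A] [Algebra k A] [Nontrivial A]

lemma eq_of_sub_algebraMap_mem_jacobson_bot {a : A} {c d : k}
    (hc : a - algebraMap k A c ∈ Ideal.jacobson ⊥)
    (hd : a - algebraMap k A d ∈ Ideal.jacobson ⊥) : c = d := by
  by_contra hne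
  have hmem : algebraMap k A (d - c) ∈ Ideal.jacobson ⊥ := by
    simpa [map_sub] using sub_mem hc hd
  exact (Ideal.jacobson_eq_top_iff.not.2 bot_ne_top)
    (Ideal.eq_top_of_isUnit_mem _ hmem ((sub_ne_zero.2 (Ne.symm hne)).isUnit.map _))

noncomputable def residueAlgHom
    (h : ∀ a : A, ∃ c : k, a - algebraMap k A c ∈ Ideal.jacobson ⊥) : A →ₐ[k] k where
  toFun a := (h a).choose
  map_one' := eq_of_sub_algebraMap_mem_jacobson_bot (h 1).choose_spec (by simp)
  map_mul' a b := by
    refine eq_of_sub_algebraMap_mem_jacobson_bot (h (a * b)).choose_spec ?_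
    have ha := (h a).choose_spec
    have hb := (h b).choose_spec
    set c := (h a).choose
    set d := (h b).choose
    have : a * b - algebraMap k A (c * d) =
        a * (b - algebraMap k A d) + algebraMap k A d * (a - algebraMap k A c) := by
      rw [mul_sub, mul_sub, Algebra.commutes d a, ← map_mul, mul_comm d c]
      abel
    rw [this]
    exact add_mem (Ideal.mul_mem_left _ _ hb) (Ideal.mul_mem_left _ _ ha)
  map_zero' := eq_of_sub_algebraMap_mem_jacobson_bot (h 0).choose_spec (by simp)
  map_add' a b := by
    refine eq_of_sub_algebraMap_mem_jacobson_bot (h (a + b)).choose_spec ?_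
    rw [map_add, add_sub_add_comm]
    exact add_mem (h a).choose_spec (h b).choose_spec
  commutes' c := eq_of_sub_algebraMap_mem_jacobson_bot (h _).choose_spec (by simp)

lemma mem_jacobson_bot_of_residueAlgHom_eq_zero
    (h : ∀ a : A, ∃ c : k, a - algebraMap k A c ∈ Ideal.jacobson ⊥) {a : A}
    (ha : residueAlgHom h a = 0) : a ∈ Ideal.jacobson ⊥ := by
  simpa [show (h a).choose = 0 from ha] using (h a).choose_spec

end Residue

namespace Representation

section Commutant

variable {k G V : Type*} [CommSemiring k] [Monoid G] [AddCommMonoid V] [Module k V]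
  {ρ : Representation k G V}

variable (ρ) in
def commutant : Subalgebra k (End k V) :=
  Subalgebra.centralizer k (Set.range ρ)

lemma mem_commutant {f : End k V} : f ∈ ρ.commutant ↔ ∀ g, Commute (ρ g) f := by
  simp [commutant, Subalgebra.mem_centralizer_iff, Commute, SemiconjBy]

end Commutant

variable {k G V : Type} [Field k] [Group G] [AddCommGroup V] [Module k V]
  {ρ : Representation k G V}

lemma IsIndecomposable.nontrivial (hρ : ρ.IsIndecomposable k G V) : Nontrivial V :=
  let ⟨v, hv⟩ := hρ.1
  nontrivial_of_ne v 0 hv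

-- Fitting's lemma: some `f ^ n` splits `V` as `ker (f ^ n) ⊕ range (f ^ n)`.
lemma IsIndecomposable.isNilpotent_or_isUnit [FiniteDimensional k V]
    (hρ : ρ.IsIndecomposable k G V) {f : End k V} (hf : f ∈ ρ.commutant) :
    IsNilpotent f ∨ IsUnit f := by
  obtain ⟨n, hcompl, hn⟩ :=
    (f.eventually_isCompl_ker_pow_range_pow.and (Filter.eventually_ge_atTop 1)).exists
  have hfn := mem_commutant.1 (pow_mem hf n)
  rcases hρ.2 _ _ (fun g => End.ker_mem_invtSubmodule_of_commute (hfn g).symm)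
    (fun g => End.range_mem_invtSubmodule_of_commute (hfn g).symm) hcompl with h | h
  · exact .inr ((isUnit_pow_iff (by omega)).1 (LinearMap.isUnit_iff_ker_eq_bot _ |>.2 h))
  · exact .inl ⟨n, LinearMap.range_eq_bot.1 h⟩

lemma IsIndecomposable.eq_zero_or_eq_one_of_isIdempotentElem [FiniteDimensional k V]
    (hρ : ρ.IsIndecomposable k G V) {f : End k V} (hf : f ∈ ρ.commutant)
    (he : IsIdempotentElem f) : f = 0 ∨ f = 1 :=
  (hρ.isNilpotent_or_isUnit hf).imp he.eq_zero_of_isNilpotent fun hu =>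
    (IsIdempotentElem.iff_eq_one_of_isUnit hu).1 he

lemma isIndecomposable_of_isIdempotentElem [Nontrivial V]
    (h : ∀ f ∈ ρ.commutant, IsIdempotentElem f → f = 0 ∨ f = 1) :
    ρ.IsIndecomposable k G V := by
  refine ⟨exists_ne 0, fun p q hp hq hpq => ?_⟩
  have he := Submodule.isIdempotentElem_projection hpq
  have hcomm : p.projection q hpq ∈ ρ.commutant := mem_commutant.2 fun g =>
    ((LinearMap.IsIdempotentElem.commute_iff he).2 <| by
      rw [Submodule.range_projection, Submodule.ker_projection]; exact ⟨hp g, hq g⟩).symm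
  rcases h _ hcomm he with h0 | h1
  · left
    rw [← Submodule.range_projection hpq, h0, LinearMap.range_zero]
  · right
    rw [← Submodule.ker_projection hpq, h1, End.one_eq_id, LinearMap.ker_id]

lemma IsIndecomposable.isNilpotent_or_isUnit_commutant [FiniteDimensional k V]
    (hρ : ρ.IsIndecomposable k G V) (a : ρ.commutant) : IsNilpotent a ∨ IsUnit a := by
  refine (hρ.isNilpotent_or_isUnit a.2).imp (fun ⟨n, hn⟩ => ⟨n, Subtype.ext hn⟩) ?_
  rintro ⟨u, hu⟩
  have hinv : (↑u⁻¹ : End k V) ∈ ρ.commutant := mem_commutant.2 fun g =>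
    (hu ▸ mem_commutant.1 a.2 g).units_inv_right
  refine ⟨⟨a, ⟨_, hinv⟩, Subtype.ext ?_, Subtype.ext ?_⟩, rfl⟩
  · simp [← hu]
  · simp [← hu]

lemma IsIndecomposable.exists_sub_algebraMap_mem_jacobson_bot [IsAlgClosed k]
    [FiniteDimensional k V] (hρ : ρ.IsIndecomposable k G V) (a : ρ.commutant) :
    ∃ c : k, a - algebraMap k ρ.commutant c ∈ Ideal.jacobson ⊥ := by
  have := hρ.nontrivial
  obtain ⟨c, hc⟩ := End.exists_eigenvalue (a : End k V)
  obtain ⟨v, hv⟩ := hc.exists_hasEigenvector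
  refine ⟨c, mem_jacobson_bot_of_isNilpotent hρ.isNilpotent_or_isUnit_commutant
    ((hρ.isNilpotent_or_isUnit_commutant _).resolve_right fun hu => hv.2 ?_)⟩
  have hinj := (End.isUnit_iff _).1 (hu.map ρ.commutant.val)
  exact hinj.1 (by simp [hv.apply_eq_smul])

noncomputable def IsIndecomposable.residue [IsAlgClosed k] [FiniteDimensional k V]
    (hρ : ρ.IsIndecomposable k G V) : ρ.commutant →ₐ[k] k :=
  have := hρ.nontrivial
  residueAlgHom hρ.exists_sub_algebraMap_mem_jacobson_bot

lemma IsIndecomposable.mem_jacobson_bot_of_residue_eq_zero [IsAlgClosed k]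
    [FiniteDimensional k V] (hρ : ρ.IsIndecomposable k G V) {a : ρ.commutant}
    (ha : hρ.residue a = 0) : a ∈ Ideal.jacobson ⊥ :=
  have := hρ.nontrivial
  mem_jacobson_bot_of_residueAlgHom_eq_zero _ ha

end Representation

lemma Matrix.exists_mapMatrix_val_eq_of_commute_scalar {R A ι : Type*} [CommSemiring R]
    [Semiring A] [Algebra R A] [Fintype ι] [DecidableEq ι] {s : Set A} {M : Matrix ι ι A}
    (h : ∀ a ∈ s, Commute (scalar ι a) M) :
    ∃ N : Matrix ι ι (Subalgebra.centralizer R s),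
      (Subalgebra.centralizer R s).val.mapMatrix N = M := by
  refine ⟨fun i j => ⟨M i j, (Subalgebra.mem_centralizer_iff R).2 fun a ha => ?_⟩, rfl⟩
  exact congrFun (congrFun (scalar_commute_iff.1 (h a ha)) i) j

section TensorMatrix

variable {k V W ι : Type*} [CommSemiring k] [AddCommMonoid V] [Module k V] [AddCommMonoid W]
  [Module k W] [Fintype ι] [DecidableEq ι]

/-- The `(i, j)` block of `e` sends `v` to the `b i`-coordinate of `e (v ⊗ b j)`. -/
noncomputable def Module.Basis.endTensorAlgEquivMatrix (b : Basis ι k W) :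
    End k (V ⊗[k] W) ≃ₐ[k] Matrix ι ι (End k V) :=
  (LinearEquiv.conjAlgEquiv k ((b.equivFun.lTensor V).trans (piScalarRight k k V ι))).trans
    (endVecAlgEquivMatrixEnd ι k k V)

lemma Module.Basis.endTensorAlgEquivMatrix_rTensor (b : Basis ι k W) (f : End k V) :
    b.endTensorAlgEquivMatrix (f.rTensor W) = Matrix.scalar ι f := by
  ext i j v
  simp [endTensorAlgEquivMatrix, Matrix.diagonal_apply, Finsupp.single_apply, eq_comm]
  split_ifs <;> simp

lemma Module.Basis.endTensorAlgEquivMatrix_lTensor (b : Basis ι k W) (u : End k W) :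
    b.endTensorAlgEquivMatrix (u.lTensor V) =
      (LinearMap.toMatrixAlgEquiv b u).map (algebraMap k (End k V)) := by
  ext i j v
  simp [endTensorAlgEquivMatrix, LinearMap.toMatrixAlgEquiv_apply]

lemma Module.Basis.endTensorAlgEquivMatrix_symm_lTensor (b : Basis ι k W)
    (S : Subalgebra k (End k V)) (u : End k W) :
    b.endTensorAlgEquivMatrix.symm (S.val.mapMatrix ((LinearMap.toMatrixAlgEquiv b u).map
      (algebraMap k S))) = u.lTensor V := by
  rw [AlgEquiv.symm_apply_eq, endTensorAlgEquivMatrix_lTensor]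
  rfl

lemma Representation.exists_commutant_matrix_of_commute_rTensor {G : Type*} [Monoid G]
    {ρ : Representation k G V} (b : Basis ι k W) {e : End k (V ⊗[k] W)}
    (hG : ∀ g, Commute ((ρ g).rTensor W) e) :
    ∃ N : Matrix ι ι ρ.commutant,
      b.endTensorAlgEquivMatrix.symm (ρ.commutant.val.mapMatrix N) = e := by
  obtain ⟨N, hN⟩ := Matrix.exists_mapMatrix_val_eq_of_commute_scalar (R := k)
    (M := b.endTensorAlgEquivMatrix e) (s := Set.range ρ) <| by
      rintro _ ⟨g, rfl⟩
      rw [← b.endTensorAlgEquivMatrix_rTensor]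
      exact (hG g).map b.endTensorAlgEquivMatrix
  exact ⟨N, (AlgEquiv.symm_apply_eq _).2 hN⟩

end TensorMatrix

namespace Representation

variable {k G H V W ι : Type} [Field k] [IsAlgClosed k] [Group G] [Group H]
  [AddCommGroup V] [Module k V] [FiniteDimensional k V] [AddCommGroup W] [Module k W]
  [FiniteDimensional k W] [Fintype ι] [DecidableEq ι]
  {ρ : Representation k G V} {τ : Representation k H W}

lemma IsIndecomposable.eq_zero_or_eq_one_of_commute_tensor (hρ : ρ.IsIndecomposable k G V)
    (hτ : τ.IsIndecomposable k H W) (b : Basis ι k W) {e : End k (V ⊗[k] W)}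
    (he : IsIdempotentElem e) (hG : ∀ g, Commute ((ρ g).rTensor W) e)
    (hH : ∀ h, Commute ((τ h).lTensor V) e) : e = 0 ∨ e = 1 := by
  let θ : Matrix ι ι ρ.commutant →ₐ[k] End k (V ⊗[k] W) :=
    b.endTensorAlgEquivMatrix.symm.toAlgHom.comp ρ.commutant.val.mapMatrix
  have hθ : Function.Injective θ :=
    b.endTensorAlgEquivMatrix.symm.injective.comp (Matrix.map_injective Subtype.val_injective)
  obtain ⟨N, rfl⟩ : ∃ N, θ N = e := exists_commutant_matrix_of_commute_rTensor b hG
  have hN : IsIdempotentElem N := hθ (by rw [map_mul, he.eq])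
  set ε := Matrix.toLinAlgEquiv b (hρ.residue.mapMatrix N)
  have hε : ε ∈ τ.commutant := mem_commutant.2 fun h => by
    have hT : θ ((LinearMap.toMatrixAlgEquiv b (τ h)).map (algebraMap k ρ.commutant)) =
        (τ h).lTensor V := b.endTensorAlgEquivMatrix_symm_lTensor ρ.commutant (τ h)
    have hcomm := (((hT ▸ hH h).of_map hθ).map hρ.residue.mapMatrix).map
      (Matrix.toLinAlgEquiv b)
    have hres : ⇑hρ.residue ∘ ⇑(algebraMap k ρ.commutant) = id :=
      funext hρ.residue.commutes
    simpa [hres, ε] using hcomm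
  rcases hτ.eq_zero_or_eq_one_of_isIdempotentElem hε ((hN.map _).map _) with h0 | h1
  · left
    have hN0 : N = 0 := hN.matrix_eq_zero_of_map_eq_zero
      (fun _ => hρ.mem_jacobson_bot_of_residue_eq_zero)
      ((Matrix.toLinAlgEquiv b).injective (by rw [map_zero, ← h0]; rfl))
    rw [hN0, map_zero]
  · right
    have hN1 : 1 - N = 0 := hN.one_sub.matrix_eq_zero_of_map_eq_zero
      (fun _ => hρ.mem_jacobson_bot_of_residue_eq_zero)
      ((Matrix.toLinAlgEquiv b).injective (by
        rw [← AlgHom.mapMatrix_apply, map_sub, map_one, map_sub, map_one, map_zero]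
        exact sub_eq_zero.2 h1.symm))
    rw [← sub_eq_zero.1 hN1, map_one]

end Representation

theorem outer_tensor_indecomposable_general
    (k : Type) [Field k] [IsAlgClosed k] (G H : Type) [Group G] [Group H]
    (V : Type) [AddCommGroup V] [Module k V] [FiniteDimensional k V]
    (W : Type) [AddCommGroup W] [Module k W] [FiniteDimensional k W]
    (ρ : Representation k G V) (τ : Representation k H W)
    (hρ : ρ.IsIndecomposable k G V) (hτ : τ.IsIndecomposable k H W) :
    Representation.IsIndecomposable k (G × H) (V ⊗[k] W)
      (Representation.tprod (ρ.comp (MonoidHom.fst G H)) (τ.comp (MonoidHom.snd G H))) := by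
  have := hρ.nontrivial
  have := hτ.nontrivial
  refine Representation.isIndecomposable_of_isIdempotentElem fun e he hidem => ?_
  have hcomm := Representation.mem_commutant.1 he
  refine hρ.eq_zero_or_eq_one_of_commute_tensor hτ (Module.finBasis k W) hidem
    (fun g => ?_) (fun h => ?_)
  · simpa [LinearMap.rTensor, End.one_eq_id] using hcomm (g, 1)
  · simpa [LinearMap.lTensor, End.one_eq_id] using hcomm (1, h)

/-- Over an algebraically closed field `k`, the outer tensor product
`X ⊗_k Y` of an indecomposable finite dimensional `kG`-module `X` and an
indecomposable finite dimensional `kH`-module `Y` (where `(g,h)` acts as the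
tensor product of the actions of `g` and `h`) is an indecomposable
`k[G × H]`-module. -/
theorem outer_tensor_indecomposable
    (k : Type) [Field k] [IsAlgClosed k] (G H : Type) [Group G] [Group H]
    [Finite G] [Finite H]
    (V : Type) [AddCommGroup V] [Module k V] [FiniteDimensional k V]
    (W : Type) [AddCommGroup W] [Module k W] [FiniteDimensional k W]
    (ρ : Representation k G V) (τ : Representation k H W)
    (hρ : ρ.IsIndecomposable k G V) (hτ : τ.IsIndecomposable k H W) :
    Representation.IsIndecomposable k (G × H) (V ⊗[k] W)
      (Representation.tprod (ρ.comp (MonoidHom.fst G H)) (τ.comp (MonoidHom.snd G H))) :=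
  outer_tensor_indecomposable_general k G H V W ρ τ hρ hτ
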